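/- Let q₁, q₂ be quaternions, not both zero, satisfying q₁ i q̄₁ = - q₂ i q̄₂. Then |q₁| = |q₂|, and there exists a unique unit quaternion p with q₁ = q₂ p; moreover this p anticommutes with i, i.e. p·i = -i·p. -/

import Mathlib

/-- The quaternion `i`. -/
noncomputable def qi : Quaternion ℝ := ⟨0, 1, 0, 0⟩

lemma qi_ne : (qi : Quaternion ℝ) ≠ 0 := by
  intro h
  have := congrArg QuaternionAlgebra.imI h
  simp [qi, Quaternion.imI_zero] at this

lemma norm_qi : ‖(qi : Quaternion ℝ)‖ = 1 := by
  have h : Quaternion.normSq qi = 1 := by rw [Quaternion.normSq_def']; simp [qi]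
  have h2 := Quaternion.normSq_eq_norm_mul_self qi
  nlinarith [norm_nonneg (qi : Quaternion ℝ)]

/-- If `q₁, q₂` are quaternions, not both zero, with `q₁ i q̄₁ = - q₂ i q̄₂`
(vanishing of the hyperkähler moment map), then `|q₁| = |q₂|` and there is a
unique unit quaternion `p` with `q₁ = q₂ p`, and this `p` anticommutes with `i`. -/
theorem stmt_0 (q₁ q₂ : Quaternion ℝ) (hne : ¬(q₁ = 0 ∧ q₂ = 0))
    (hμ : q₁ * qi * star q₁ = -(q₂ * qi * star q₂)) :
    ‖q₁‖ = ‖q₂‖ ∧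
      ∃! p : Quaternion ℝ, ‖p‖ = 1 ∧ q₁ = q₂ * p ∧ p * qi = -(qi * p) := by
  have h1 : q₁ ≠ 0 := by
    intro h
    apply hne
    refine ⟨h, ?_⟩
    rw [h] at hμ
    simp at hμ
    rcases hμ with h' | h'
    · rcases h' with h' | h'
      · exact h'
      · exact absurd h' qi_ne
    · simpa using congrArg star h'
  have h2 : q₂ ≠ 0 := by
    intro h
    apply hne
    refine ⟨?_, h⟩
    rw [h] at hμ
    simp at hμ
    rcases hμ with h' | h'
    · rcases h' with h' | h'
      · exact h'
      · exact absurd h' qi_ne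
    · simpa using congrArg star h'
  have hn : ‖q₁‖ = ‖q₂‖ := by
    have := congrArg norm hμ
    rw [norm_neg, norm_mul, norm_mul, norm_mul, norm_mul, norm_star, norm_star,
      norm_qi] at this
    nlinarith [norm_nonneg q₁, norm_nonneg q₂]
  have hnp : ‖q₂⁻¹ * q₁‖ = 1 := by
    rw [norm_mul, norm_inv, ← hn]
    exact inv_mul_cancel₀ (norm_ne_zero_iff.mpr h1)
  have hfac : q₁ = q₂ * (q₂⁻¹ * q₁) := by
    rw [← mul_assoc, mul_inv_cancel₀ h2, one_mul]
  refine ⟨hn, ⟨q₂⁻¹ * q₁, ⟨hnp, hfac, ?_⟩, ?_⟩⟩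
  · have hp : (q₂⁻¹ * q₁) * qi * star (q₂⁻¹ * q₁) = -qi := by
      rw [star_mul]
      have e : q₂⁻¹ * q₁ * qi * (star q₁ * star q₂⁻¹)
          = q₂⁻¹ * (q₁ * qi * star q₁) * star q₂⁻¹ := by
        simp only [mul_assoc]
      rw [e, hμ, star_inv₀]
      have hs2 : star q₂ ≠ 0 := star_ne_zero.mpr h2
      rw [mul_neg, neg_mul, ← mul_assoc, ← mul_assoc,
        inv_mul_cancel₀ h2, one_mul, mul_assoc, mul_inv_cancel₀ hs2, mul_one]
    set p := q₂⁻¹ * q₁ with hpdef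
    have hsp : star p * p = 1 := by
      rw [Quaternion.star_mul_self]
      have : Quaternion.normSq p = 1 := by
        rw [Quaternion.normSq_eq_norm_mul_self, hnp]; norm_num
      rw [this]; simp
    calc p * qi = p * qi * (star p * p) := by rw [hsp, mul_one]
      _ = (p * qi * star p) * p := by simp only [mul_assoc]
      _ = -qi * p := by rw [hp]
      _ = -(qi * p) := by rw [neg_mul]
  · rintro p' ⟨-, hq, -⟩
    rw [hq, ← mul_assoc, inv_mul_cancel₀ h2, one_mul]
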